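/- Let π : X → Y be a pseudo-quotient for the action of G on X. If U ⊆ X is open and orbitwise-closed, then π(U) is open in Y and the restriction π|_U : U → π(U), where U and π(U) carry the subspace topologies and G acts on U by restriction, is a pseudo-quotient for the action of G on U. -/

import Mathlib

/-!
If `π x` lies in the closures of `π(A)` and `π(B)` for closed invariant sets `A` and `B`, then
the orbit closure of `x` meets `A ∩ B`: separation puts points `z₁ ∈ A` and `z₂ ∈ B` in the orbit
closure of `x`; since `Y` is T1, `π` is constant on orbit closures, so `π z₁ = π z₂`, and
separation once more makes the orbit closures of `z₁` and `z₂` meet, necessarily inside `A ∩ B`.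

Separating the orbit closure of a point of `U` from `Uᶜ` shows that `π(U)` is the complement of
the closure of `π(Uᶜ)`. For closed invariant `W₁, W₂ ⊆ U`, the fact above applied to their
closures in `X` gives a common point in the orbit closure of a point of `U`, hence in `U`, hence
in `W₁ ∩ W₂`.
-/

open Pointwise

/-- A pseudo-quotient for the action of a group `G` on a topological space `X`:
a continuous surjective map `π : X → Y` that is constant on `G`-orbits and such that
for any two disjoint closed `G`-invariant subsets `W₁, W₂ ⊆ X`, the closures of
`π(W₁)` and `π(W₂)` are disjoint. -/
structure IsPseudoQuotient (G : Type*) {X Y : Type*} [Group G] [MulAction G X]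
    [TopologicalSpace X] [TopologicalSpace Y] (π : X → Y) : Prop where
  continuous : Continuous π
  surjective : Function.Surjective π
  invariant : ∀ (g : G) (x : X), π (g • x) = π x
  separates : ∀ W₁ W₂ : Set X, IsClosed W₁ → IsClosed W₂ →
    (∀ g : G, g • W₁ = W₁) → (∀ g : G, g • W₂ = W₂) → Disjoint W₁ W₂ →
    Disjoint (closure (π '' W₁)) (closure (π '' W₂))


/-- A subset `A ⊆ X` is orbitwise-closed if for every `a ∈ A` the closure of the orbit
`G·a` is contained in `A`. -/
def OrbitwiseClosed (G : Type*) {X : Type*} [Group G] [MulAction G X] [TopologicalSpace X]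
    (A : Set X) : Prop :=
  ∀ a ∈ A, closure (MulAction.orbit G a) ⊆ A

open MulAction

section

variable {G X : Type*} [Group G] [MulAction G X] [TopologicalSpace X]

theorem OrbitwiseClosed.smul_mem {U : Set X} (hU : OrbitwiseClosed G U) {x : X} (hx : x ∈ U)
    (g : G) : g • x ∈ U :=
  hU x hx (subset_closure (mem_orbit x g))

theorem OrbitwiseClosed.smul_set_eq {U : Set X} (hU : OrbitwiseClosed G U) (g : G) :
    g • U = U :=
  Set.Subset.antisymm (Set.smul_set_subset_iff.2 fun _ hx => hU.smul_mem hx g)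
    fun x hx => ⟨g⁻¹ • x, hU.smul_mem hx g⁻¹, smul_inv_smul g x⟩

theorem IsClosed.closure_orbit_subset {A : Set X} (hAc : IsClosed A) (hA : ∀ g : G, g • A = A)
    {z : X} (hz : z ∈ A) : closure (orbit G z) ⊆ A :=
  hAc.closure_subset_iff.2 <| by
    rintro _ ⟨g, rfl⟩
    rw [← hA g]
    exact Set.smul_mem_smul_set hz

variable [ContinuousConstSMul G X]

theorem smul_closure_orbit (g : G) (x : X) : g • closure (orbit G x) = closure (orbit G x) := by
  rw [← closure_smul, smul_orbit]

theorem smul_closure_image_val (S : SubMulAction G X) {W : Set S}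
    (hW : ∀ g : G, g • W = W) (g : G) :
    g • closure (Subtype.val '' W : Set X) = closure (Subtype.val '' W : Set X) := by
  have : g • (Subtype.val '' W : Set X) = Subtype.val '' (g • W) :=
    (image_smul_setₛₗ S.subtype g W).symm
  rw [← closure_smul, this, hW g]

end

namespace IsPseudoQuotient

variable {G X Y : Type*} [Group G] [MulAction G X] [TopologicalSpace X] [TopologicalSpace Y]
  {π : X → Y} (hπ : IsPseudoQuotient G π)
include hπ

theorem apply_eq_of_mem_closure_orbit [T1Space Y] {x z : X} (hz : z ∈ closure (orbit G x)) :
    π z = π x := by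
  have : π z ∈ closure {π x} := map_mem_closure hπ.continuous hz <| by
    rintro _ ⟨g, rfl⟩
    exact hπ.invariant g x
  simpa using this

variable [ContinuousConstSMul G X]

theorem closure_orbit_inter_nonempty {A : Set X} (hAc : IsClosed A) (hA : ∀ g : G, g • A = A)
    {x : X} (hx : π x ∈ closure (π '' A)) : (closure (orbit G x) ∩ A).Nonempty := by
  by_contra h
  rw [Set.not_nonempty_iff_eq_empty, ← Set.disjoint_iff_inter_eq_empty] at h
  exact (hπ.separates _ _ isClosed_closure hAc (smul_closure_orbit · x) hA h).ne_of_mem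
    (subset_closure ⟨x, subset_closure (mem_orbit_self x), rfl⟩) hx rfl

theorem closure_orbit_inter_inter_nonempty [T1Space Y] {A B : Set X} (hAc : IsClosed A)
    (hA : ∀ g : G, g • A = A) (hBc : IsClosed B) (hB : ∀ g : G, g • B = B) {x : X}
    (hxA : π x ∈ closure (π '' A)) (hxB : π x ∈ closure (π '' B)) :
    (closure (orbit G x) ∩ (A ∩ B)).Nonempty := by
  obtain ⟨z₁, hz₁x, hz₁A⟩ := hπ.closure_orbit_inter_nonempty hAc hA hxA
  obtain ⟨z₂, hz₂x, hz₂B⟩ := hπ.closure_orbit_inter_nonempty hBc hB hxB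
  have hz₁z₂ : π z₁ ∈ closure (π '' closure (orbit G z₂)) := by
    rw [hπ.apply_eq_of_mem_closure_orbit hz₁x, ← hπ.apply_eq_of_mem_closure_orbit hz₂x]
    exact subset_closure ⟨z₂, subset_closure (mem_orbit_self z₂), rfl⟩
  obtain ⟨w, hw₁, hw₂⟩ :=
    hπ.closure_orbit_inter_nonempty isClosed_closure (smul_closure_orbit · z₂) hz₁z₂
  exact ⟨w, isClosed_closure.closure_orbit_subset (smul_closure_orbit · x) hz₁x hw₁,
    hAc.closure_orbit_subset hA hz₁A hw₁, hBc.closure_orbit_subset hB hz₂B hw₂⟩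

theorem isOpen_image {U : Set X} (hUo : IsOpen U) (hU : OrbitwiseClosed G U) :
    IsOpen (π '' U) := by
  have hUc : ∀ g : G, g • Uᶜ = Uᶜ := fun g => by rw [Set.smul_set_compl, hU.smul_set_eq]
  have : π '' U = (closure (π '' Uᶜ))ᶜ := by
    refine Set.Subset.antisymm ?_ fun y hy => ?_
    · rintro _ ⟨x, hx, rfl⟩ hxc
      obtain ⟨z, hzx, hzU⟩ := hπ.closure_orbit_inter_nonempty hUo.isClosed_compl hUc hxc
      exact hzU (hU x hx hzx)
    · obtain ⟨x, rfl⟩ := hπ.surjective y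
      exact ⟨x, of_not_not fun hx => hy (subset_closure ⟨x, hx, rfl⟩), rfl⟩
  rw [this]
  exact isClosed_closure.isOpen_compl

theorem restrict [T1Space Y] (S : SubMulAction G X) (hS : OrbitwiseClosed G (S : Set X)) :
    IsPseudoQuotient G
      (fun u : S => (⟨π u, Set.mem_image_of_mem π u.2⟩ : π '' (S : Set X))) := by
  set ρ : S → π '' (S : Set X) := fun u => ⟨π u, Set.mem_image_of_mem π u.2⟩
  have hρ : ∀ {W : Set S} {u : S}, ρ u ∈ closure (ρ '' W) →
      π u ∈ closure (π '' closure (Subtype.val '' W)) := by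
    intro W u h
    refine closure_mono ?_ (closure_subtype.1 h)
    rintro _ ⟨_, ⟨v, hv, rfl⟩, rfl⟩
    exact ⟨v, subset_closure ⟨v, hv, rfl⟩, rfl⟩
  have hρs : Function.Surjective ρ := by
    rintro ⟨_, x, hx, rfl⟩
    exact ⟨⟨x, hx⟩, rfl⟩
  refine ⟨(hπ.continuous.comp continuous_subtype_val).subtype_mk _, hρs,
    fun g u => Subtype.ext (hπ.invariant g u), fun W₁ W₂ hW₁c hW₂c hW₁ hW₂ hW => ?_⟩
  refine Set.disjoint_left.2 fun y h₁ h₂ => ?_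
  obtain ⟨u, rfl⟩ := hρs y
  obtain ⟨w, hwu, hw₁, hw₂⟩ := hπ.closure_orbit_inter_inter_nonempty
    isClosed_closure (smul_closure_image_val S hW₁) isClosed_closure
    (smul_closure_image_val S hW₂) (hρ h₁) (hρ h₂)
  have hwS : w ∈ S := hS u u.2 hwu
  have hw : ∀ {W : Set S}, IsClosed W → w ∈ closure (Subtype.val '' W) → (⟨w, hwS⟩ : S) ∈ W :=
    fun hWc h => hWc.closure_subset (closure_subtype.2 h)
  exact hW.ne_of_mem (hw hW₁c hw₁) (hw hW₂c hw₂) rfl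

end IsPseudoQuotient

/-- If `U` is open and orbitwise-closed, then `π(U)` is open and the restriction
`π|_U : U → π(U)` (with subspace topologies and restricted `G`-action) is a
pseudo-quotient. -/
theorem pseudoQuotient_restrict_open_orbitwiseClosed {G X Y : Type*} [Group G]
    [MulAction G X] [TopologicalSpace X] [TopologicalSpace Y] [T1Space Y]
    [ContinuousConstSMul G X]
    (π : X → Y) (hπ : IsPseudoQuotient G π)
    (U : Set X) (hUo : IsOpen U) (hUoc : OrbitwiseClosed G U) :
    IsOpen (π '' U) ∧
    IsPseudoQuotient G
      (fun u : (⟨U, fun g {x} hx =>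
          hUoc x hx (subset_closure (MulAction.mem_orbit x g))⟩ : SubMulAction G X) =>
        (⟨π u, Set.mem_image_of_mem π u.2⟩ : π '' U)) :=
  ⟨hπ.isOpen_image hUo hUoc, hπ.restrict _ hUoc⟩
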